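/- arXiv:1907.01601 — 3 statements merged into one kernel-verified Lean document; each statement's English description precedes it below -/
import Mathlib

section
/- Define δ_n := (m−1)·E(X_n · m^{X_n}) − E(m^{X_n}) for the recursive system. If E(X_0 · m^{X_0}) < ∞, then for all n ≥ 0 one has δ_{n+1} = H_n(m)^{m−1} · δ_n, where H_n(m) = E(m^{X_n}); consequently δ_n = δ_0 · ∏_{i=0}^{n−1} H_i(m)^{m−1}. -/
open scoped ENNReal

/-- Law of the sum of `n` i.i.d. copies of a `PMF ℕ`. -/
noncomputable def sumIID (p : PMF ℕ) : ℕ → PMF ℕ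
  | 0 => PMF.pure 0
  | (k+1) => (sumIID p k).bind (fun s => p.map (fun a => a + s))

/-- One step of the Derrida–Retaux recursion: `X' = (X_1 + ⋯ + X_m − 1)⁺`. -/
noncomputable def step (m : ℕ) (p : PMF ℕ) : PMF ℕ :=
  (sumIID p m).map (fun s => s - 1)

/-- `H(m) = E(m^X)`. -/
noncomputable def Hm (m : ℕ) (p : PMF ℕ) : ℝ := (∑' k, p k * (m : ℝ≥0∞) ^ k).toReal

/-- `δ = (m−1)·E(X·m^X) − E(m^X)`. -/
noncomputable def deltaN (m : ℕ) (p : PMF ℕ) : ℝ :=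
  ((m : ℝ) - 1) * (∑' k, p k * ((k : ℝ≥0∞) * (m : ℝ≥0∞) ^ k)).toReal - Hm m p

/-!
Write `G(s) = E s^X` and `θG(s) = E(X s^X) = s G'(s)`. For `S = X_1 + ⋯ + X_m` we have
`G_S = G^m` and `θG_S = m G^(m-1) θG`, and for `Y = (S - 1)⁺` peeling off the atom at `0` gives
`s G_Y(s) + P(S = 0) = G_S(s) + s P(S = 0)` and `s θG_Y(s) + G_S(s) = θG_S(s) + P(S = 0)`.
At `s = m` the unknown `P(S = 0)` cancels from `(m - 1) θG_Y(m) - G_Y(m)`, leaving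
`G(m)^(m-1) ((m - 1) θG(m) - G(m))`.
-/

open scoped NNReal

namespace PMF

variable {α β : Type*}

theorem tsum_bind_mul (p : PMF α) (q : α → PMF β) (f : β → ℝ≥0∞) :
    ∑' b, p.bind q b * f b = ∑' a, p a * ∑' b, q a b * f b := by
  simp_rw [bind_apply, ← ENNReal.tsum_mul_right, ← ENNReal.tsum_mul_left, mul_assoc]
  exact ENNReal.tsum_comm

theorem tsum_map_mul (p : PMF α) (g : α → β) (f : β → ℝ≥0∞) :
    ∑' b, p.map g b * f b = ∑' a, p a * f (g a) := by
  rw [map, tsum_bind_mul]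
  refine tsum_congr fun a => congrArg (p a * ·) ?_
  rw [tsum_eq_single (g a) fun b hb => by simp [pure_apply, hb]]
  simp

noncomputable def pgf (p : PMF ℕ) (s : ℝ≥0∞) : ℝ≥0∞ := ∑' k, p k * s ^ k

/-- `E(X s^X) = s · (d/ds) pgf p s`. -/
noncomputable def eulerPgf (p : PMF ℕ) (s : ℝ≥0∞) : ℝ≥0∞ := ∑' k, p k * (k * s ^ k)

variable (p q : PMF ℕ) (s : ℝ≥0∞)

@[simp]
theorem pgf_pure_zero : pgf (pure 0) s = 1 := by
  rw [pgf, tsum_eq_single 0] <;> simp +contextual [pure_apply]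

@[simp]
theorem eulerPgf_pure_zero : eulerPgf (pure 0) s = 0 := by
  rw [eulerPgf, tsum_eq_single 0] <;> simp +contextual [pure_apply]

theorem pgf_bind_map_add : pgf (q.bind fun b => p.map (· + b)) s = pgf p s * pgf q s := by
  simp_rw [pgf, tsum_bind_mul, tsum_map_mul, pow_add, ← mul_assoc, ENNReal.tsum_mul_right,
    ← ENNReal.tsum_mul_left]
  exact tsum_congr fun b => by ring

theorem eulerPgf_bind_map_add : eulerPgf (q.bind fun b => p.map (· + b)) s =
    eulerPgf p s * pgf q s + pgf p s * eulerPgf q s := by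
  have expand : ∀ a b : ℕ, p a * (((a + b : ℕ) : ℝ≥0∞) * s ^ (a + b)) =
      p a * (a * s ^ a) * s ^ b + p a * s ^ a * (b * s ^ b) := by
    intro a b; push_cast; ring
  simp_rw [eulerPgf, pgf, tsum_bind_mul, tsum_map_mul, expand, ENNReal.tsum_add,
    ENNReal.tsum_mul_right, mul_add, ENNReal.tsum_add, ← ENNReal.tsum_mul_left]
  congr 1 <;> exact tsum_congr fun b => by ring

theorem pgf_eq_add_tsum_succ : pgf q s = q 0 + ∑' k, q (k + 1) * s ^ (k + 1) := by
  rw [pgf, tsum_eq_zero_add' ENNReal.summable, pow_zero, mul_one]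

theorem pgf_map_pred_eq : pgf (q.map (· - 1)) s = q 0 + ∑' k, q (k + 1) * s ^ k := by
  rw [pgf, tsum_map_mul, tsum_eq_zero_add' ENNReal.summable]
  simp

theorem eulerPgf_eq_tsum_succ : eulerPgf q s = ∑' k, q (k + 1) * ((k + 1) * s ^ (k + 1)) := by
  rw [eulerPgf, tsum_eq_zero_add' ENNReal.summable]
  simp

theorem eulerPgf_map_pred_eq : eulerPgf (q.map (· - 1)) s = ∑' k, q (k + 1) * (k * s ^ k) := by
  rw [eulerPgf, tsum_map_mul, tsum_eq_zero_add' ENNReal.summable]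
  simp

theorem pgf_map_pred : s * pgf (q.map (· - 1)) s + q 0 = pgf q s + s * q 0 := by
  rw [pgf_map_pred_eq, pgf_eq_add_tsum_succ, mul_add, ← ENNReal.tsum_mul_left]
  rw [tsum_congr fun k => show s * (q (k + 1) * s ^ k) = q (k + 1) * s ^ (k + 1) by ring]
  ring

theorem eulerPgf_map_pred :
    s * eulerPgf (q.map (· - 1)) s + pgf q s = eulerPgf q s + q 0 := by
  rw [eulerPgf_map_pred_eq, eulerPgf_eq_tsum_succ, pgf_eq_add_tsum_succ, ← ENNReal.tsum_mul_left,
    add_left_comm, ← ENNReal.tsum_add, add_comm]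
  congr 1
  exact tsum_congr fun k => by ring

theorem pgf_sumIID (k : ℕ) : pgf (sumIID p k) s = pgf p s ^ k := by
  induction k with
  | zero => simp [sumIID]
  | succ k ih => rw [sumIID, pgf_bind_map_add, ih, pow_succ, mul_comm]

theorem eulerPgf_sumIID (k : ℕ) :
    eulerPgf (sumIID p k) s = k * pgf p s ^ (k - 1) * eulerPgf p s := by
  induction k with
  | zero => simp [sumIID]
  | succ k ih =>
    rw [sumIID, eulerPgf_bind_map_add, ih, pgf_sumIID, Nat.add_sub_cancel]
    rcases k with _ | k
    · simp
    · push_cast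
      ring

theorem pgf_le_one_add_eulerPgf : pgf p s ≤ 1 + eulerPgf p s := by
  rw [pgf, eulerPgf, ← p.tsum_coe, ← ENNReal.tsum_add]
  refine ENNReal.tsum_le_tsum fun k => ?_
  calc p k * s ^ k ≤ p k * (1 + k * s ^ k) := by
        gcongr
        rcases k with _ | k
        · simp
        · exact le_add_left (le_mul_of_one_le_left' (by simp))
    _ = p k + p k * (k * s ^ k) := by ring

theorem pgf_ne_top_of_eulerPgf_ne_top (h : eulerPgf p s ≠ ∞) : pgf p s ≠ ∞ :=
  ne_top_of_le_ne_top (ENNReal.add_ne_top.2 ⟨ENNReal.one_ne_top, h⟩)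
    (pgf_le_one_add_eulerPgf p s)

end PMF

/-- Here `a, b` play `G(m), θG(m)` for `X`, `a', b'` the same for `Y`, and `c = P(S = 0)`. -/
theorem toReal_delta_eq_of_identities {m : ℕ} (hm : m ≠ 0) {a b a' b' c : ℝ≥0∞}
    (ha : a ≠ ∞) (hb : b ≠ ∞) (ha' : a' ≠ ∞) (hb' : b' ≠ ∞) (hc : c ≠ ∞)
    (hA : m * a' + c = a ^ m + m * c) (hB : m * b' + a ^ m = m * a ^ (m - 1) * b + c) :
    ((m : ℝ) - 1) * b'.toReal - a'.toReal =
      a.toReal ^ (m - 1) * (((m : ℝ) - 1) * b.toReal - a.toReal) := by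
  lift a to ℝ≥0 using ha
  lift b to ℝ≥0 using hb
  lift a' to ℝ≥0 using ha'
  lift b' to ℝ≥0 using hb'
  lift c to ℝ≥0 using hc
  obtain ⟨k, rfl⟩ := Nat.exists_eq_succ_of_ne_zero hm
  norm_cast at hA hB
  have hA' := congrArg ((↑) : ℝ≥0 → ℝ) hA
  have hB' := congrArg ((↑) : ℝ≥0 → ℝ) hB
  push_cast [pow_succ] at hA' hB' ⊢
  simp only [ENNReal.coe_toReal, add_sub_cancel_right]
  apply mul_left_cancel₀ (show (k : ℝ) + 1 ≠ 0 by positivity)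
  linear_combination k * hB' - hA'

open PMF

section Step

variable (m : ℕ) (p : PMF ℕ)

theorem pgf_step : m * pgf (step m p) m + sumIID p m 0 = pgf p m ^ m + m * sumIID p m 0 := by
  rw [step, pgf_map_pred, pgf_sumIID]

theorem eulerPgf_step : m * eulerPgf (step m p) m + pgf p m ^ m =
    m * pgf p m ^ (m - 1) * eulerPgf p m + sumIID p m 0 := by
  rw [← pgf_sumIID, step, eulerPgf_map_pred, eulerPgf_sumIID]

variable {m p}

theorem eulerPgf_step_ne_top (hm : m ≠ 0) (hp : eulerPgf p m ≠ ∞) :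
    eulerPgf (step m p) m ≠ ∞ := by
  have h : m * eulerPgf (step m p) m ≠ ∞ := by
    refine ne_top_of_le_ne_top ?_ (le_self_add.trans (eulerPgf_step m p).le)
    exact ENNReal.add_ne_top.2 ⟨ENNReal.mul_ne_top (ENNReal.mul_ne_top (by simp)
      (ENNReal.pow_ne_top (pgf_ne_top_of_eulerPgf_ne_top p m hp))) hp, apply_ne_top _ _⟩
  exact (ENNReal.lt_top_of_mul_ne_top_right h (by simpa using hm)).ne

theorem deltaN_step (hm : m ≠ 0) (hp : eulerPgf p m ≠ ∞) :
    deltaN m (step m p) = Hm m p ^ (m - 1) * deltaN m p :=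
  have hp' := eulerPgf_step_ne_top hm hp
  toReal_delta_eq_of_identities hm (pgf_ne_top_of_eulerPgf_ne_top _ _ hp) hp
    (pgf_ne_top_of_eulerPgf_ne_top _ _ hp') hp' (apply_ne_top _ _) (pgf_step m p)
    (eulerPgf_step m p)

end Step

theorem stmt3 (m : ℕ) (hm : 2 ≤ m) (X : ℕ → PMF ℕ)
    (hX : ∀ n, X (n+1) = step m (X n))
    (h0 : (∑' k, X 0 k * ((k : ℝ≥0∞) * (m : ℝ≥0∞) ^ k)) < ∞) :
    (∀ n, deltaN m (X (n+1)) = (Hm m (X n)) ^ (m - 1) * deltaN m (X n)) ∧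
    ∀ n, deltaN m (X n) = deltaN m (X 0) * ∏ i ∈ Finset.range n, (Hm m (X i)) ^ (m - 1) := by
  have hm0 : m ≠ 0 := by omega
  have finite : ∀ n, eulerPgf (X n) m ≠ ∞ := by
    intro n
    induction n with
    | zero => exact h0.ne
    | succ n ih => rw [hX]; exact eulerPgf_step_ne_top hm0 ih
  have recursion : ∀ n, deltaN m (X (n+1)) = Hm m (X n) ^ (m - 1) * deltaN m (X n) :=
    fun n => by rw [hX]; exact deltaN_step hm0 (finite n)
  refine ⟨recursion, fun n => ?_⟩
  induction n with
  | zero => simp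
  | succ n ih => rw [recursion, ih, Finset.prod_range_succ]; ring
end

section
/- For the recursive system, the expectations satisfy the exact identity E(X_{n+1}) = m·E(X_n) − 1 + P(X_n = 0)^m for every n ≥ 0, and consequently E(X_n) = m^n·E(X_0) − Σ_{i=0}^{n−1} m^{n−1−i}·(1 − P(X_i = 0)^m). -/
open scoped ENNReal

/-- Real-valued expectation of a `PMF ℕ`. -/
noncomputable def realE (p : PMF ℕ) : ℝ := (∑' k, p k * (k : ℝ≥0∞)).toReal

/- Taking expectations in `X_{n+1} = (X_{n,1} + ⋯ + X_{n,m} - 1)⁺` and using `(s - 1)⁺ + 1 = s + 𝟙{s = 0}`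
gives `E X_{n+1} + 1 = m E X_n + P(X_{n,1} + ⋯ + X_{n,m} = 0) = m E X_n + P(X_n = 0)^m`.
All of this is done in `ℝ≥0∞`, where the series need no summability side conditions; finiteness of
`E X_n`, propagated by the same identity, then allows passing to `ℝ`. The closed form is the
solution of the linear recursion `a_{n+1} = m a_n - c_n`. -/

namespace PMF

variable {α β : Type*}

theorem tsum_map_apply_mul (p : PMF α) (f : α → β) (g : β → ℝ≥0∞) :
    ∑' b, p.map f b * g b = ∑' a, p a * g (f a) := by
  simp only [map_apply, ← ENNReal.tsum_mul_right]
  rw [ENNReal.tsum_comm]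
  refine tsum_congr fun a => ?_
  simp only [ite_mul, zero_mul]
  rw [tsum_eq_single (f a) fun b hb => by simp [hb]]
  simp

theorem tsum_bind_apply_mul (p : PMF α) (q : α → PMF β) (g : β → ℝ≥0∞) :
    ∑' b, p.bind q b * g b = ∑' a, p a * ∑' b, q a b * g b := by
  simp only [bind_apply, ← ENNReal.tsum_mul_right]
  rw [ENNReal.tsum_comm]
  refine tsum_congr fun a => ?_
  rw [← ENNReal.tsum_mul_left]
  simp [mul_assoc]

theorem tsum_apply_mul_const (p : PMF α) (c : ℝ≥0∞) : ∑' a, p a * c = c := by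
  rw [ENNReal.tsum_mul_right, p.tsum_coe, one_mul]

noncomputable def ennMean (p : PMF ℕ) : ℝ≥0∞ := ∑' k, p k * (k : ℝ≥0∞)

theorem toReal_ennMean (p : PMF ℕ) : (ennMean p).toReal = realE p := rfl

theorem ennMean_map_add_const (p : PMF ℕ) (s : ℕ) :
    ennMean (p.map (· + s)) = ennMean p + s := by
  simp only [ennMean, tsum_map_apply_mul, Nat.cast_add, mul_add]
  rw [ENNReal.tsum_add, tsum_apply_mul_const]

theorem ennMean_map_pred_add_one (p : PMF ℕ) :
    ennMean (p.map (· - 1)) + 1 = ennMean p + p 0 := by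
  have pointwise : ∀ s : ℕ, p s * ((s - 1 : ℕ) : ℝ≥0∞) + p s * 1
      = p s * s + if s = 0 then p s else 0 := by
    rintro (_ | s)
    · simp
    · simp [mul_add]
  rw [ennMean, tsum_map_apply_mul, ← tsum_apply_mul_const p 1, ← ENNReal.tsum_add]
  simp_rw [pointwise]
  rw [ENNReal.tsum_add, tsum_ite_eq, ennMean]

end PMF

open PMF

theorem ennMean_sumIID (p : PMF ℕ) (k : ℕ) : ennMean (sumIID p k) = k * ennMean p := by
  induction k with
  | zero => simp [sumIID, ennMean]
  | succ k ih =>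
    have inner : ∀ s : ℕ, ∑' b, p.map (· + s) b * (b : ℝ≥0∞) = ennMean p + s :=
      ennMean_map_add_const p
    rw [sumIID, ennMean, tsum_bind_apply_mul]
    simp_rw [inner, mul_add]
    rw [ENNReal.tsum_add, tsum_apply_mul_const, ← ennMean, ih]
    push_cast
    ring

theorem sumIID_apply_zero (p : PMF ℕ) (k : ℕ) : sumIID p k 0 = p 0 ^ k := by
  induction k with
  | zero => simp [sumIID]
  | succ k ih =>
    have map_add_apply_zero : ∀ s : ℕ, p.map (· + s) 0 = if s = 0 then p 0 else 0 := by
      intro s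
      rw [map_apply, tsum_eq_single 0 fun b hb => by rw [if_neg (by omega)]]
      rcases s with _ | s <;> simp
    rw [sumIID, bind_apply]
    simp_rw [map_add_apply_zero, mul_ite, mul_zero]
    rw [tsum_ite_eq, ih, pow_succ, mul_comm]

theorem ennMean_step_add_one (m : ℕ) (p : PMF ℕ) :
    ennMean (step m p) + 1 = m * ennMean p + p 0 ^ m := by
  rw [step, ennMean_map_pred_add_one, ennMean_sumIID, sumIID_apply_zero]

theorem ennMean_step_ne_top {p : PMF ℕ} (m : ℕ) (hp : ennMean p ≠ ∞) :
    ennMean (step m p) ≠ ∞ := by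
  refine ne_top_of_le_ne_top ?_ (le_self_add.trans_eq (ennMean_step_add_one m p))
  exact ENNReal.add_ne_top.2
    ⟨ENNReal.mul_ne_top (ENNReal.natCast_ne_top m) hp, ENNReal.pow_ne_top (p.apply_ne_top 0)⟩

theorem realE_step {p : PMF ℕ} (m : ℕ) (hp : ennMean p ≠ ∞) :
    realE (step m p) = m * realE p - 1 + (p 0).toReal ^ m := by
  have := congrArg ENNReal.toReal (ennMean_step_add_one m p)
  rw [ENNReal.toReal_add (ennMean_step_ne_top m hp) ENNReal.one_ne_top,
    ENNReal.toReal_add (ENNReal.mul_ne_top (ENNReal.natCast_ne_top m) hp)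
      (ENNReal.pow_ne_top (p.apply_ne_top 0)),
    ENNReal.toReal_mul, ENNReal.toReal_pow, ENNReal.toReal_one, ENNReal.toReal_natCast,
    toReal_ennMean, toReal_ennMean] at this
  linarith

theorem eq_pow_mul_sub_sum_of_succ_eq {R : Type*} [CommRing R] (r : R) (a c : ℕ → R)
    (h : ∀ n, a (n + 1) = r * a n - c n) (n : ℕ) :
    a n = r ^ n * a 0 - ∑ i ∈ Finset.range n, r ^ (n - 1 - i) * c i := by
  induction n with
  | zero => simp
  | succ n ih =>
    have shift : r * ∑ i ∈ Finset.range n, r ^ (n - 1 - i) * c i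
        = ∑ i ∈ Finset.range n, r ^ (n - i) * c i := by
      rw [Finset.mul_sum]
      refine Finset.sum_congr rfl fun i hi => ?_
      rw [← mul_assoc, ← pow_succ']
      congr 2
      have := Finset.mem_range.1 hi
      omega
    rw [h, ih, Finset.sum_range_succ, Nat.add_sub_cancel, Nat.sub_self, pow_zero, one_mul,
      ← shift]
    ring

theorem stmt12_general (m : ℕ) (X : ℕ → PMF ℕ)
    (hX : ∀ n, X (n+1) = step m (X n))
    (h0 : (∑' k, X 0 k * (k : ℝ≥0∞)) < ∞) :
    (∀ n, realE (X (n+1)) = m * realE (X n) - 1 + ((X n 0).toReal) ^ m) ∧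
    ∀ n, realE (X n)
      = (m : ℝ) ^ n * realE (X 0)
        - ∑ i ∈ Finset.range n, (m : ℝ) ^ (n - 1 - i) * (1 - ((X i 0).toReal) ^ m) := by
  have finite : ∀ n, ennMean (X n) ≠ ∞ := by
    intro n
    induction n with
    | zero => exact h0.ne
    | succ n ih => exact hX n ▸ ennMean_step_ne_top m ih
  have recursion : ∀ n, realE (X (n+1)) = m * realE (X n) - 1 + ((X n 0).toReal) ^ m :=
    fun n => hX n ▸ realE_step m (finite n)
  refine ⟨recursion, eq_pow_mul_sub_sum_of_succ_eq _ _ _ fun n => ?_⟩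
  rw [recursion]
  ring

theorem stmt12 (m : ℕ) (hm : 2 ≤ m) (X : ℕ → PMF ℕ)
    (hX : ∀ n, X (n+1) = step m (X n))
    (h0 : (∑' k, X 0 k * (k : ℝ≥0∞)) < ∞) :
    (∀ n, realE (X (n+1)) = m * realE (X n) - 1 + ((X n 0).toReal) ^ m) ∧
    ∀ n, realE (X n)
      = (m : ℝ) ^ n * realE (X 0)
        - ∑ i ∈ Finset.range n, (m : ℝ) ^ (n - 1 - i) * (1 - ((X i 0).toReal) ^ m) :=
  stmt12_general m X hX h0
end

section
/- Let (U_n) and (V_n) be two recursive systems (each satisfying W_{n+1} =_d (W_{n,1}+...+W_{n,m}−1)^+ for i.i.d. copies) coupled so that U_0 ≥ V_0 almost surely, with E(U_0) < ∞. Then for all n ≥ 0: 0 ≤ E(U_n) − E(V_n) ≤ m^n · (E(U_0) − E(V_0)). -/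
/-! Encode the coupling by the law of the pair `(V₀, U₀ - V₀)` and run the recursion on pairs: add
`m` i.i.d. copies of the pair and map `(s, e) ↦ ((s - 1)⁺, (s + e - 1)⁺ - (s - 1)⁺)`. Since `V` and
`U = V + (U - V)` are additive functions of the pair, the marginals `V` and `U` follow the
recursion, so `E Uₙ - E Vₙ` is the mean of the nonnegative second coordinate. As
`(s + e - 1)⁺ - (s - 1)⁺ ≤ e`, linearity of expectation over the `m` copies shows that its mean
grows at most by a factor `m` per step. -/

open scoped ENNReal

namespace PMF

variable {α β : Type*}

noncomputable def lexpect (p : PMF α) (f : α → ℝ≥0∞) : ℝ≥0∞ := ∑' a, p a * f a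

theorem lexpect_pure (a : α) (f : α → ℝ≥0∞) : (pure a).lexpect f = f a := by
  rw [lexpect, tsum_eq_single a fun b hb => by simp [pure_apply, hb]]
  simp

theorem lexpect_bind (p : PMF α) (g : α → PMF β) (f : β → ℝ≥0∞) :
    (p.bind g).lexpect f = p.lexpect fun a => (g a).lexpect f := by
  simp only [lexpect, bind_apply, ← ENNReal.tsum_mul_right, ← ENNReal.tsum_mul_left, mul_assoc]
  exact ENNReal.tsum_comm

theorem lexpect_map (p : PMF α) (g : α → β) (f : β → ℝ≥0∞) :
    (p.map g).lexpect f = p.lexpect (f ∘ g) := by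
  simp only [map, lexpect_bind, Function.comp_apply, lexpect_pure]
  rfl

theorem lexpect_const (p : PMF α) (c : ℝ≥0∞) : p.lexpect (fun _ => c) = c := by
  rw [lexpect, ENNReal.tsum_mul_right, tsum_coe, one_mul]

theorem lexpect_add (p : PMF α) (f g : α → ℝ≥0∞) :
    p.lexpect (fun a => f a + g a) = p.lexpect f + p.lexpect g := by
  simp only [lexpect, mul_add, ENNReal.tsum_add]

theorem lexpect_mono (p : PMF α) {f g : α → ℝ≥0∞} (h : f ≤ g) : p.lexpect f ≤ p.lexpect g :=
  ENNReal.tsum_le_tsum fun a => mul_le_mul_right (h a) _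

theorem map_congr_of_eqOn_support (p : PMF α) {f g : α → β} (h : Set.EqOn f g p.support) :
    p.map f = p.map g := by
  ext b
  simp only [map_apply]
  refine tsum_congr fun a => ?_
  by_cases ha : a ∈ p.support
  · rw [h ha]
  · simp [(mem_support_iff p a).not_left.mp ha]

section IidSum

variable {M N : Type*} [AddMonoid M] [AddMonoid N]

noncomputable def iidSum (p : PMF M) : ℕ → PMF M
  | 0 => pure 0
  | k + 1 => (p.iidSum k).bind fun s => p.map (· + s)

theorem map_iidSum (p : PMF M) (φ : M →+ N) (k : ℕ) :
    (p.iidSum k).map φ = (p.map φ).iidSum k := by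
  induction k with
  | zero => simp [iidSum, pure_map]
  | succ k ih =>
    simp only [iidSum, map_bind, ← ih, bind_map, map_comp]
    congr 1
    funext s
    congr 1
    funext a
    simp

theorem lexpect_iidSum (p : PMF M) (f : M →+ ℝ≥0∞) (k : ℕ) :
    (p.iidSum k).lexpect f = k * p.lexpect f := by
  induction k with
  | zero => simp [iidSum, lexpect_pure]
  | succ k ih =>
    have hstep (s : M) : (p.map (· + s)).lexpect f = p.lexpect f + f s := by
      simp only [lexpect_map, Function.comp_def, map_add, lexpect_add, lexpect_const]
    simp only [iidSum, lexpect_bind, hstep, lexpect_add, lexpect_const, ih]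
    push_cast
    ring

end IidSum

end PMF

open PMF

theorem sumIID_eq_iidSum (p : PMF ℕ) (k : ℕ) : sumIID p k = p.iidSum k := by
  induction k with
  | zero => rfl
  | succ k ih => simp only [sumIID, iidSum, ih]

theorem realE_eq_toReal_lexpect (p : PMF ℕ) : realE p = (p.lexpect Nat.cast).toReal := rfl

theorem lexpect_step_le (m : ℕ) (p : PMF ℕ) :
    (step m p).lexpect Nat.cast ≤ m * p.lexpect Nat.cast := by
  rw [step, lexpect_map, sumIID_eq_iidSum]
  refine (lexpect_mono _ fun s => ?_).trans_eq (lexpect_iidSum p (Nat.castAddMonoidHom ℝ≥0∞) m)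
  simp

theorem lexpect_step_ne_top (m : ℕ) {p : PMF ℕ} (hp : p.lexpect Nat.cast ≠ ⊤) :
    (step m p).lexpect Nat.cast ≠ ⊤ :=
  ne_top_of_le_ne_top (ENNReal.mul_ne_top (ENNReal.natCast_ne_top m) hp) (lexpect_step_le m p)

noncomputable def coupledStep (m : ℕ) (K : PMF (ℕ × ℕ)) : PMF (ℕ × ℕ) :=
  (K.iidSum m).map fun q => (q.1 - 1, (q.1 + q.2 - 1) - (q.1 - 1))

theorem map_fst_coupledStep (m : ℕ) (K : PMF (ℕ × ℕ)) :
    (coupledStep m K).map Prod.fst = step m (K.map Prod.fst) := by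
  rw [coupledStep, step, map_comp, sumIID_eq_iidSum,
    show K.map Prod.fst = K.map (AddMonoidHom.fst ℕ ℕ) from rfl, ← map_iidSum, map_comp]
  rfl

theorem map_add_coupledStep (m : ℕ) (K : PMF (ℕ × ℕ)) :
    (coupledStep m K).map (fun q => q.1 + q.2) = step m (K.map fun q => q.1 + q.2) := by
  rw [coupledStep, step, map_comp, sumIID_eq_iidSum,
    show K.map (fun q => q.1 + q.2) = K.map (AddMonoidHom.fst ℕ ℕ + AddMonoidHom.snd ℕ ℕ) from rfl,
    ← map_iidSum, map_comp]
  congr 1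
  funext q
  simp only [Function.comp_apply, AddMonoidHom.add_apply, AddMonoidHom.coe_fst,
    AddMonoidHom.coe_snd]
  omega

theorem lexpect_snd_coupledStep_le (m : ℕ) (K : PMF (ℕ × ℕ)) :
    (coupledStep m K).lexpect (fun q => q.2) ≤ m * K.lexpect fun q => q.2 := by
  rw [coupledStep, lexpect_map]
  refine (lexpect_mono _ fun q => ?_).trans_eq
    (lexpect_iidSum K ((Nat.castAddMonoidHom ℝ≥0∞).comp (AddMonoidHom.snd ℕ ℕ)) m)
  simp only [Function.comp_apply, AddMonoidHom.coe_comp, Nat.coe_castAddMonoidHom,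
    AddMonoidHom.coe_snd, Nat.cast_le]
  omega

theorem lexpect_snd_coupledStep_iterate_le (m : ℕ) (K : PMF (ℕ × ℕ)) (n : ℕ) :
    ((coupledStep m)^[n] K).lexpect (fun q => q.2) ≤ m ^ n * K.lexpect fun q => q.2 := by
  induction n with
  | zero => simp
  | succ n ih =>
    calc ((coupledStep m)^[n + 1] K).lexpect (fun q => q.2)
        ≤ m * ((coupledStep m)^[n] K).lexpect (fun q => q.2) := by
          rw [Function.iterate_succ_apply']
          exact lexpect_snd_coupledStep_le m _
      _ ≤ m * (m ^ n * K.lexpect fun q => q.2) := by gcongr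
      _ = m ^ (n + 1) * K.lexpect fun q => q.2 := by ring

theorem lexpect_map_add (K : PMF (ℕ × ℕ)) :
    (K.map fun q => q.1 + q.2).lexpect Nat.cast =
      (K.map Prod.fst).lexpect Nat.cast + K.lexpect fun q => q.2 := by
  simp only [lexpect_map, Function.comp_def, Nat.cast_add, lexpect_add]

theorem realE_map_add_sub_realE_map_fst (K : PMF (ℕ × ℕ))
    (hfin : (K.map fun q => q.1 + q.2).lexpect Nat.cast ≠ ⊤) :
    realE (K.map fun q => q.1 + q.2) - realE (K.map Prod.fst) = (K.lexpect fun q => q.2).toReal := by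
  rw [lexpect_map_add, ENNReal.add_ne_top] at hfin
  rw [realE_eq_toReal_lexpect, realE_eq_toReal_lexpect, lexpect_map_add,
    ENNReal.toReal_add hfin.1 hfin.2]
  ring

theorem stmt13_general (m : ℕ) (U V : ℕ → PMF ℕ)
    (hU : ∀ n, U (n+1) = step m (U n)) (hV : ∀ n, V (n+1) = step m (V n))
    -- a coupling of the initial laws under which `U₀ ≥ V₀` almost surely:
    (J : PMF (ℕ × ℕ)) (hJ1 : J.map Prod.fst = U 0) (hJ2 : J.map Prod.snd = V 0)
    (hJdom : ∀ q ∈ J.support, q.2 ≤ q.1)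
    (hEU : (∑' k, U 0 k * (k : ℝ≥0∞)) < ∞) :
    ∀ n, 0 ≤ realE (U n) - realE (V n) ∧
      realE (U n) - realE (V n) ≤ (m : ℝ) ^ n * (realE (U 0) - realE (V 0)) := by
  set K₀ : PMF (ℕ × ℕ) := J.map fun q => (q.2, q.1 - q.2)
  have hK : ∀ n, ((coupledStep m)^[n] K₀).map Prod.fst = V n ∧
      ((coupledStep m)^[n] K₀).map (fun q => q.1 + q.2) = U n := by
    intro n
    induction n with
    | zero =>
      refine ⟨by rw [← hJ2, Function.iterate_zero_apply, map_comp]; rfl, ?_⟩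
      rw [← hJ1, Function.iterate_zero_apply, map_comp]
      exact map_congr_of_eqOn_support J fun q hq => Nat.add_sub_cancel' (hJdom q hq)
    | succ n ih =>
      rw [Function.iterate_succ_apply', map_fst_coupledStep, map_add_coupledStep, ih.1, ih.2,
        hU, hV]
      exact ⟨rfl, rfl⟩
  have hUfin (n : ℕ) : (U n).lexpect Nat.cast ≠ ⊤ :=
    Nat.rec hEU.ne (fun n ih => hU n ▸ lexpect_step_ne_top m ih) n
  have hdiff (n : ℕ) :
      realE (U n) - realE (V n) = (((coupledStep m)^[n] K₀).lexpect fun q => q.2).toReal := by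
    rw [← (hK n).1, ← (hK n).2]
    exact realE_map_add_sub_realE_map_fst _ ((hK n).2 ▸ hUfin n)
  have hΔ₀ : K₀.lexpect (fun q => q.2) ≠ ⊤ := by
    have h := (hK 0).2 ▸ hUfin 0
    rw [lexpect_map_add, ENNReal.add_ne_top] at h
    exact h.2
  intro n
  refine ⟨hdiff n ▸ ENNReal.toReal_nonneg, ?_⟩
  rw [hdiff, hdiff, ← ENNReal.toReal_natCast, ← ENNReal.toReal_pow, ← ENNReal.toReal_mul]
  exact ENNReal.toReal_mono (ENNReal.mul_ne_top (by simp) hΔ₀)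
    (lexpect_snd_coupledStep_iterate_le m K₀ n)

theorem stmt13 (m : ℕ) (hm : 2 ≤ m) (U V : ℕ → PMF ℕ)
    (hU : ∀ n, U (n+1) = step m (U n)) (hV : ∀ n, V (n+1) = step m (V n))
    -- a coupling of the initial laws under which `U₀ ≥ V₀` almost surely:
    (J : PMF (ℕ × ℕ)) (hJ1 : J.map Prod.fst = U 0) (hJ2 : J.map Prod.snd = V 0)
    (hJdom : ∀ q ∈ J.support, q.2 ≤ q.1)
    (hEU : (∑' k, U 0 k * (k : ℝ≥0∞)) < ∞) :
    ∀ n, 0 ≤ realE (U n) - realE (V n) ∧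
      realE (U n) - realE (V n) ≤ (m : ℝ) ^ n * (realE (U 0) - realE (V 0)) :=
  stmt13_general m U V hU hV J hJ1 hJ2 hJdom hEU
end
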